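/- arXiv:2401.13271 — 2 statements merged into one kernel-verified Lean document; each statement's English description precedes it below -/
import Mathlib

section
/- For all real a, b > 0, ∫₀^1 t^(a−1)(1+t)^(−a−b) dt + ∫₀^1 t^(b−1)(1+t)^(−a−b) dt = Γ(a)·Γ(b)/Γ(a+b). -/
open Real MeasureTheory Set

/-!
The substitution `x = t / (1 + t)` turns `∫₀¹ t^(a-1) (1+t)^(-a-b) dt` into the Beta integral
`∫ x^(a-1) (1-x)^(b-1) dx` over `[0, 1/2]`. Doing the same with `a` and `b` swapped and then
reflecting `x ↦ 1 - x` gives the Beta integral over `[1/2, 1]`, so the sum is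
`B(a, b) = Γ(a) Γ(b) / Γ(a + b)`, which Mathlib provides for complex parameters.
-/

lemma ofReal_rpow_mul_one_sub_rpow (a b : ℝ) {x : ℝ} (hx : x ∈ Icc (0 : ℝ) 1) :
    ((x ^ (a - 1) * (1 - x) ^ (b - 1) : ℝ) : ℂ) =
      (x : ℂ) ^ ((a : ℂ) - 1) * (1 - (x : ℂ)) ^ ((b : ℂ) - 1) := by
  rw [Complex.ofReal_mul, Complex.ofReal_cpow hx.1, Complex.ofReal_cpow (sub_nonneg.2 hx.2)]
  push_cast
  rfl

lemma intervalIntegrable_rpow_mul_one_sub_rpow {a b : ℝ} (ha : 0 < a) (hb : 0 < b) :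
    IntervalIntegrable (fun x : ℝ => x ^ (a - 1) * (1 - x) ^ (b - 1)) volume 0 1 := by
  have h := Complex.betaIntegral_convergent (u := a) (v := b) (by simpa) (by simpa)
  rw [intervalIntegrable_iff_integrableOn_Ioc_of_le zero_le_one] at h ⊢
  refine IntegrableOn.congr_fun (Integrable.re h) (fun x hx => ?_) measurableSet_Ioc
  simp only [← ofReal_rpow_mul_one_sub_rpow a b (Ioc_subset_Icc_self hx), RCLike.re_to_complex,
    Complex.ofReal_re]

theorem integral_rpow_mul_one_sub_rpow {a b : ℝ} (ha : 0 < a) (hb : 0 < b) :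
    ∫ x in (0 : ℝ)..1, x ^ (a - 1) * (1 - x) ^ (b - 1) = Gamma a * Gamma b / Gamma (a + b) := by
  apply Complex.ofReal_injective
  have hbeta : ((∫ x in (0 : ℝ)..1, x ^ (a - 1) * (1 - x) ^ (b - 1) : ℝ) : ℂ) =
      Complex.betaIntegral a b := by
    rw [← intervalIntegral.integral_ofReal]
    refine intervalIntegral.integral_congr fun x hx => ?_
    exact ofReal_rpow_mul_one_sub_rpow a b (by rwa [uIcc_of_le zero_le_one] at hx)
  have hGamma := Complex.Gamma_mul_Gamma_eq_betaIntegral (s := a) (t := b) (by simpa) (by simpa)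
  have hne : Complex.Gamma (a + b) ≠ 0 := by
    rw [← Complex.ofReal_add, Complex.Gamma_ofReal]
    exact_mod_cast (Gamma_pos_of_pos (add_pos ha hb)).ne'
  rw [hbeta, Complex.ofReal_div, Complex.ofReal_mul, ← Complex.Gamma_ofReal, ← Complex.Gamma_ofReal,
    ← Complex.Gamma_ofReal, Complex.ofReal_add, eq_div_iff hne, mul_comm, hGamma]

lemma rpow_mul_one_sub_rpow_comp_div_one_add {t : ℝ} (ht : 0 ≤ t) (a b : ℝ) :
    (t / (1 + t)) ^ (a - 1) * (1 - t / (1 + t)) ^ (b - 1) * ((1 + t) ^ 2)⁻¹ =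
      t ^ (a - 1) * (1 + t) ^ (-a - b) := by
  have hpos : 0 < 1 + t := by linarith
  have hsub : 1 - t / (1 + t) = (1 + t)⁻¹ := by field_simp; ring
  have hpow : (1 + t) ^ (a + b) = (1 + t) ^ (a - 1) * (1 + t) ^ (b - 1) * (1 + t) ^ 2 := by
    rw [← rpow_natCast, ← rpow_add hpos, ← rpow_add hpos]
    congr 1
    push_cast
    ring
  rw [hsub, div_rpow ht hpos.le, inv_rpow hpos.le, show -a - b = -(a + b) by ring,
    rpow_neg hpos.le, hpow]
  field_simp

theorem integral_rpow_mul_one_add_rpow_eq {c : ℝ} (hc : 0 ≤ c) (a b : ℝ) :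
    ∫ t in (0 : ℝ)..c, t ^ (a - 1) * (1 + t) ^ (-a - b) =
      ∫ x in (0 : ℝ)..c / (1 + c), x ^ (a - 1) * (1 - x) ^ (b - 1) := by
  have hderiv : ∀ t, 0 ≤ t → HasDerivAt (fun t : ℝ => t / (1 + t)) ((1 + t) ^ 2)⁻¹ t := by
    intro t ht
    have hne : 1 + t ≠ 0 := by linarith
    refine ((hasDerivAt_id' t).div ((hasDerivAt_id' t).const_add 1) hne).congr_deriv ?_
    field_simp
    ring
  have hsubst := intervalIntegral.integral_comp_mul_deriv_of_deriv_nonneg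
    (g := fun x : ℝ => x ^ (a - 1) * (1 - x) ^ (b - 1))
    (fun t ht => (hderiv t (by rw [uIcc_of_le hc] at ht; exact ht.1)).continuousAt.continuousWithinAt)
    (fun t ht => hderiv t (by rw [min_eq_left hc] at ht; exact ht.1.le)) (fun t _ => by positivity)
  rw [zero_div] at hsubst
  rw [← hsubst]
  refine intervalIntegral.integral_congr fun t ht => ?_
  rw [uIcc_of_le hc] at ht
  exact (rpow_mul_one_sub_rpow_comp_div_one_add ht.1 a b).symm

theorem integral_rpow_mul_one_sub_rpow_symm (a b c : ℝ) :
    ∫ x in c..1, x ^ (a - 1) * (1 - x) ^ (b - 1) =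
      ∫ x in (0 : ℝ)..1 - c, x ^ (b - 1) * (1 - x) ^ (a - 1) := by
  have hreflect := intervalIntegral.integral_comp_sub_left
    (fun x => x ^ (b - 1) * (1 - x) ^ (a - 1)) 1 (a := c) (b := 1)
  simp only [sub_sub_cancel, sub_self] at hreflect
  rw [← hreflect]
  simp_rw [mul_comm]

theorem stmt4 (a b : ℝ) (ha : 0 < a) (hb : 0 < b) :
    (∫ t in Ioo (0 : ℝ) 1, t ^ (a - 1) * (1 + t) ^ (-a - b)) +
      (∫ t in Ioo (0 : ℝ) 1, t ^ (b - 1) * (1 + t) ^ (-a - b)) =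
      Gamma a * Gamma b / Gamma (a + b) := by
  have hβ := intervalIntegrable_rpow_mul_one_sub_rpow ha hb
  have hhalf : (1 / 2 : ℝ) ∈ uIcc 0 1 := by norm_num [mem_uIcc]
  have hsplit := intervalIntegral.integral_add_adjacent_intervals
    (hβ.mono_set (uIcc_subset_uIcc left_mem_uIcc hhalf))
    (hβ.mono_set (uIcc_subset_uIcc hhalf right_mem_uIcc))
  rw [← integral_rpow_mul_one_sub_rpow ha hb, ← hsplit, integral_rpow_mul_one_sub_rpow_symm,
    ← integral_Ioc_eq_integral_Ioo, ← integral_Ioc_eq_integral_Ioo,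
    ← intervalIntegral.integral_of_le zero_le_one, ← intervalIntegral.integral_of_le zero_le_one,
    integral_rpow_mul_one_add_rpow_eq zero_le_one a b, show -a - b = -b - a by ring,
    integral_rpow_mul_one_add_rpow_eq zero_le_one b a]
  norm_num
end

section
/- For real numbers p > −3, the integral ∫_{A×B} |x−y|^p dx dy is finite, where A = B(0,1/2) ⊂ ℝ² and B = B(0,1) \ B(0,1/2) ⊂ ℝ², each with two-dimensional Lebesgue measure. -/
/-!
Substituting `z = x - y`, the integral becomes `∫ |z|^p · |{y ∈ B : z + y ∈ A}| dz`. That fibre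
lies in the part of the disc `B(-z, 1/2)` outside `B(0, 1/2)`, a crescent of area at most `π|z|`,
and it is empty unless `|z| < 3/2`. Hence the integral is at most `π ∫_{B(0,3/2)} |z|^(p+1) dz`,
which is finite because `p + 1 > -2` is above the critical exponent of the plane.
-/

open MeasureTheory Set Metric Real
open scoped ENNReal

local notation "ℝ²" => EuclideanSpace ℝ (Fin 2)

theorem setLIntegral_prod_comp_sub {G : Type*} [MeasurableSpace G] [AddGroup G] [MeasurableAdd₂ G]
    [MeasurableNeg G] (μ ν : Measure G) [SFinite μ] [SFinite ν] [μ.IsAddRightInvariant]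
    {s t : Set G} (hs : MeasurableSet s) (ht : MeasurableSet t) {g : G → ℝ≥0∞}
    (hg : Measurable g) :
    ∫⁻ q in s ×ˢ t, g (q.1 - q.2) ∂μ.prod ν = ∫⁻ z, g z * ν (t ∩ (z + ·) ⁻¹' s) ∂μ := by
  set F : G × G → ℝ≥0∞ := fun q => g q.1 * (t ∩ (q.1 + ·) ⁻¹' s).indicator 1 q.2
  have hF : Measurable F := by
    refine (hg.comp measurable_fst).mul (Measurable.indicator measurable_const ?_)
    exact measurable_snd ht |>.inter ((measurable_fst.add measurable_snd) hs)
  have hcomp : (s ×ˢ t).indicator (fun q => g (q.1 - q.2)) = fun q => F (q.1 - q.2, q.2) := by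
    ext ⟨x, y⟩
    by_cases hx : x ∈ s <;> by_cases hy : y ∈ t <;> simp [F, indicator, hx, hy]
  rw [← lintegral_indicator (hs.prod ht), hcomp,
    (measurePreserving_sub_prod μ ν).lintegral_comp hF, lintegral_prod _ hF.aemeasurable]
  refine lintegral_congr fun z => ?_
  have hfiber : MeasurableSet (t ∩ (z + ·) ⁻¹' s) := ht.inter (measurable_const_add z hs)
  simp only [F]
  rw [lintegral_const_mul _ (measurable_one.indicator hfiber), lintegral_indicator_one hfiber]

theorem EuclideanSpace.volume_ball_sdiff_ball_zero_le (a : ℝ²) (r : ℝ) :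
    volume (ball a r \ ball 0 r) ≤ ENNReal.ofReal (2 * π * r * ‖a‖) := by
  have hvol (ρ : ℝ) (hρ : 0 ≤ ρ) : volume (ball a ρ) = ENNReal.ofReal (π * ρ ^ 2) := by
    rw [EuclideanSpace.volume_ball_fin_two, ← ENNReal.ofReal_pow hρ,
      ← ENNReal.ofReal_mul (by positivity), mul_comm]
  rcases le_or_gt ‖a‖ r with har | har
  · have hsub : ball a r \ ball 0 r ⊆ ball a r \ ball a (r - ‖a‖) :=
      sdiff_subset_sdiff_right (ball_subset_ball' (by rw [dist_zero_right]; linarith))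
    calc volume (ball a r \ ball 0 r) ≤ volume (ball a r \ ball a (r - ‖a‖)) := measure_mono hsub
      _ = volume (ball a r) - volume (ball a (r - ‖a‖)) :=
          measure_sdiff (ball_subset_ball (by linarith [norm_nonneg a]))
            measurableSet_ball.nullMeasurableSet measure_ball_lt_top.ne
      _ = ENNReal.ofReal (π * r ^ 2 - π * (r - ‖a‖) ^ 2) := by
          rw [hvol r ((norm_nonneg a).trans har), hvol _ (by linarith),
            ENNReal.ofReal_sub _ (by positivity)]
      _ ≤ ENNReal.ofReal (2 * π * r * ‖a‖) := by
          gcongr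
          nlinarith [pi_pos, sq_nonneg ‖a‖]
  · rcases le_or_gt r 0 with hr | hr
    · simp [ball_eq_empty.mpr hr]
    calc volume (ball a r \ ball 0 r) ≤ volume (ball a r) := measure_mono sdiff_subset
      _ = ENNReal.ofReal (π * r ^ 2) := hvol r hr.le
      _ ≤ ENNReal.ofReal (2 * π * r * ‖a‖) := by
          refine ENNReal.ofReal_le_ofReal ?_
          nlinarith [mul_pos pi_pos hr]

theorem volume_annulus_inter_preimage_add_ball_le (r R : ℝ) (z : ℝ²) :
    volume ((ball 0 R \ ball 0 r) ∩ (z + ·) ⁻¹' ball 0 r) ≤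
      (ball 0 (R + r)).indicator (fun w => ENNReal.ofReal (2 * π * r * ‖w‖)) z := by
  by_cases hz : z ∈ ball 0 (R + r)
  · rw [indicator_of_mem hz, ← norm_neg z]
    refine le_trans (measure_mono ?_) (EuclideanSpace.volume_ball_sdiff_ball_zero_le (-z) r)
    rintro y ⟨⟨-, hy⟩, hzy⟩
    refine ⟨?_, hy⟩
    rw [mem_preimage, mem_ball_zero_iff] at hzy
    rwa [mem_ball, dist_eq_norm, sub_neg_eq_add, add_comm]
  · have hempty : (ball 0 R \ ball 0 r) ∩ (z + ·) ⁻¹' ball 0 r = ∅ := by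
      refine eq_empty_of_forall_notMem ?_
      rintro y ⟨⟨hyR, -⟩, hzy⟩
      refine hz ?_
      rw [mem_preimage, mem_ball_zero_iff] at hzy
      rw [mem_ball_zero_iff] at hyR ⊢
      calc ‖z‖ = ‖(z + y) - y‖ := by rw [add_sub_cancel_right]
        _ ≤ ‖z + y‖ + ‖y‖ := norm_sub_le _ _
        _ < R + r := by linarith
    rw [indicator_of_notMem hz, hempty, measure_empty]

theorem stmt17 (p : ℝ) (hp : -3 < p) :
    IntegrableOn
      (fun q : EuclideanSpace ℝ (Fin 2) × EuclideanSpace ℝ (Fin 2) => ‖q.1 - q.2‖ ^ p)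
      (Metric.ball 0 (1/2) ×ˢ (Metric.ball 0 1 \ Metric.ball 0 (1/2))) volume := by
  have hint : IntegrableOn (fun z : ℝ² => π * ‖z‖ ^ (p + 1)) (ball 0 (1 + 1/2)) :=
    integrableOn_ball_of_norm_le_rpow (α := -(p + 1)) (by simp) (by simp; linarith)
      (ae_of_all _ fun z => by rw [neg_neg, Real.norm_of_nonneg (by positivity)])
      (by fun_prop : Measurable _).aestronglyMeasurable
  have hbound (z : ℝ²) :
      ENNReal.ofReal (‖z‖ ^ p) * volume ((ball 0 1 \ ball 0 (1/2)) ∩ (z + ·) ⁻¹' ball 0 (1/2)) ≤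
        (ball 0 (1 + 1/2)).indicator (fun w => ENNReal.ofReal (π * ‖w‖ ^ (p + 1))) z := by
    grw [volume_annulus_inter_preimage_add_ball_le]
    by_cases hz : z ∈ ball (0 : ℝ²) (1 + 1/2)
    · rw [indicator_of_mem hz, indicator_of_mem hz, ← ENNReal.ofReal_mul (by positivity)]
      have hrpow : ‖z‖ ^ p * ‖z‖ ^ (1 : ℝ) ≤ ‖z‖ ^ (p + 1) := le_rpow_add (norm_nonneg z) p 1
      rw [rpow_one] at hrpow
      refine ENNReal.ofReal_le_ofReal ?_
      nlinarith [pi_pos]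
    · rw [indicator_of_notMem hz, indicator_of_notMem hz, mul_zero]
  refine ⟨(by fun_prop : Measurable _).aestronglyMeasurable, ?_⟩
  rw [hasFiniteIntegral_iff_ofReal (ae_of_all _ fun _ => by positivity), Measure.volume_eq_prod]
  calc _ = ∫⁻ z, ENNReal.ofReal (‖z‖ ^ p) *
          volume ((ball (0 : ℝ²) 1 \ ball 0 (1/2)) ∩ (z + ·) ⁻¹' ball 0 (1/2)) :=
        setLIntegral_prod_comp_sub volume volume measurableSet_ball
          (measurableSet_ball.diff measurableSet_ball) (by fun_prop)
    _ ≤ ∫⁻ z in ball (0 : ℝ²) (1 + 1/2), ENNReal.ofReal (π * ‖z‖ ^ (p + 1)) := by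
        rw [← lintegral_indicator measurableSet_ball]
        exact lintegral_mono hbound
    _ < ⊤ := hint.setLIntegral_lt_top
end
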